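/- arXiv:2510.00122 — 4 statements merged into one kernel-verified Lean document; each statement's English description precedes it below -/
import Mathlib

section
/- Let K ≥ 3 and d ≥ 1, let ρ : ℝ → [0,∞) satisfy {ρ(u) : u ∈ ℝ} = [0,∞), and let τ : ℝ → ℝ be V-shaped, i.e., τ is non-increasing on u < 0, non-decreasing on u > 0, and {τ(u) : u ≤ 0} = {τ(u) : u ≥ 0} = [τ(0), ∞). Define the VSL link P_vsl(y; u) = P_sl(y; τ(ρ[u])), where ρ[u] is the ordering transform and τ acts coordinatewise. Then the representation ability of the VSL model with the unrestricted learner class equals the set of all unimodal conditional-probability maps with strictly positive coordinates: {(x ↦ (P_vsl(y; g(x)))_{y∈[K]}) : g : ℝ^d → ℝ^K} = {p : ℝ^d → Δ̂_{K-1}^∅}. -/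
open scoped BigOperators

noncomputable section

/-- The probability simplex Δ_{K-1} ⊆ ℝ^K. -/
def simplex (K : ℕ) : Set (Fin K → ℝ) :=
  {p | (∑ k, p k) = 1 ∧ ∀ k, 0 ≤ p k ∧ p k ≤ 1}

/-- A PMF (vector) is unimodal: there is a mode M such that p is
nondecreasing up to M and nonincreasing after M. -/
def Unimodal {K : ℕ} (p : Fin K → ℝ) : Prop :=
  ∃ M : Fin K, (∀ k, p k ≤ p M) ∧
    (∀ i j : Fin K, i ≤ j → j ≤ M → p i ≤ p j) ∧
    (∀ i j : Fin K, M ≤ i → i ≤ j → p j ≤ p i)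

/-- Δ̂_{K-1}: the set of unimodal PMFs. -/
def uniSimplex (K : ℕ) : Set (Fin K → ℝ) :=
  {p | p ∈ simplex K ∧ Unimodal p}

/-- The stereotype logit (SL) link function. -/
def Psl {K : ℕ} (u : Fin K → ℝ) (y : Fin K) : ℝ :=
  Real.exp (-(u y)) / ∑ k, Real.exp (-(u k))

/-- The ordering transform ρ[u]: (ρ[u])_1 = u_1, (ρ[u])_k = (ρ[u])_{k-1} + ρ(u_k). -/
def ordT (ρ : ℝ → ℝ) {K : ℕ} (u : Fin K → ℝ) : Fin K → ℝ :=
  fun k => u ⟨0, k.pos⟩ +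
    ∑ j ∈ Finset.univ.filter (fun j : Fin K => 0 < (j : ℕ) ∧ (j : ℕ) ≤ (k : ℕ)), ρ (u j)

/-- The Euclidean norm on ℝ^K. -/
def euclNorm {K : ℕ} (u : Fin K → ℝ) : ℝ :=
  Real.sqrt (∑ k, (u k) ^ 2)

/-- Euclidean distance from a point to a set. -/
def DH {K : ℕ} (u : Fin K → ℝ) (S : Set (Fin K → ℝ)) : ℝ :=
  sInf ((fun v => euclNorm (u - v)) '' S)

/-!
The ordering transform `ordT ρ` maps onto the nondecreasing vectors, since `ρ` attains every
increment `≥ 0`. A V-shaped `τ` turns a nondecreasing vector into one that first decreases and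
then increases, and the SL link `exp (-·) / Z` turns that into a positive unimodal PMF.
Conversely, for a positive unimodal `p` with mode `M`, the vector `τ 0 + log p_M - log p_k` has
SL image `p`, is `≥ τ 0`, and decreases up to `M` and increases after it; taking preimages under
the left branch of `τ` up to `M` and under the right branch after it gives a nondecreasing `w`,
because a section of a monotone map is monotone.
-/

open Real Set

theorem AntitoneOn.Iic_of_Iio {α β : Type*} [PartialOrder α] [Preorder β] {f : α → β} {a : α}
    (hf : AntitoneOn f (Iio a)) (ha : ∀ x ≤ a, f a ≤ f x) : AntitoneOn f (Iic a) := by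
  intro x hx y hy hxy
  rcases (mem_Iic.1 hy).eq_or_lt with rfl | hya
  · exact ha x hx
  · exact hf (hxy.trans_lt hya) hya hxy

theorem MonotoneOn.Ici_of_Ioi {α β : Type*} [PartialOrder α] [Preorder β] {f : α → β} {a : α}
    (hf : MonotoneOn f (Ioi a)) (ha : ∀ x ≥ a, f a ≤ f x) : MonotoneOn f (Ici a) := by
  intro x hx y hy hxy
  rcases (mem_Ici.1 hx).eq_or_lt with rfl | hax
  · exact ha y hy
  · exact hf hax (hax.trans_le hxy) hxy

variable {K : ℕ}

theorem Unimodal.comp_monotoneOn {p : Fin K → ℝ} {f : ℝ → ℝ} {s : Set ℝ} (hp : Unimodal p)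
    (hf : MonotoneOn f s) (hs : ∀ k, p k ∈ s) : Unimodal (f ∘ p) := by
  obtain ⟨M, hM, hinc, hdec⟩ := hp
  exact ⟨M, fun k => hf (hs k) (hs M) (hM k),
    fun i j hij hjM => hf (hs i) (hs j) (hinc i j hij hjM),
    fun i j hMi hij => hf (hs j) (hs i) (hdec i j hMi hij)⟩

section Psl

variable [NeZero K] (v : Fin K → ℝ)

theorem sum_exp_neg_pos : 0 < ∑ k, exp (-v k) :=
  Finset.sum_pos (fun _ _ => exp_pos _) Finset.univ_nonempty

theorem Psl_pos (y : Fin K) : 0 < Psl v y :=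
  div_pos (exp_pos _) (sum_exp_neg_pos v)

theorem sum_Psl : ∑ y, Psl v y = 1 := by
  simp only [Psl, ← Finset.sum_div]
  exact div_self (sum_exp_neg_pos v).ne'

theorem Psl_mem_simplex : Psl v ∈ simplex K :=
  ⟨sum_Psl v, fun k => ⟨(Psl_pos v k).le,
    sum_Psl v ▸ Finset.single_le_sum (fun i _ => (Psl_pos v i).le) (Finset.mem_univ k)⟩⟩

theorem unimodal_Psl (hv : Unimodal fun k => -v k) : Unimodal (Psl v) :=
  hv.comp_monotoneOn (f := fun t => exp t / ∑ k, exp (-v k)) (s := univ)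
    (monotoneOn_univ.2 fun _ _ hab =>
      div_le_div_of_nonneg_right (exp_le_exp.2 hab) (sum_exp_neg_pos v).le)
    fun _ => trivial

end Psl

theorem Psl_sub_log (c : ℝ) {p : Fin K → ℝ} (hp : ∀ k, 0 < p k) (hsum : ∑ k, p k = 1) :
    Psl (fun k => c - log (p k)) = p := by
  have hexp : ∀ k, exp (-(c - log (p k))) = p k / exp c := fun k => by
    rw [neg_sub, exp_sub, exp_log (hp k)]
  funext y
  simp only [Psl, hexp, ← Finset.sum_div, hsum]
  field_simp

section OrderingTransform

variable (ρ : ℝ → ℝ)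

theorem ordT_zero (u : Fin K → ℝ) (h : 0 < K) : ordT ρ u ⟨0, h⟩ = u ⟨0, h⟩ := by
  have hempty : Finset.univ.filter
      (fun j : Fin K => 0 < (j : ℕ) ∧ (j : ℕ) ≤ ((⟨0, h⟩ : Fin K) : ℕ)) = ∅ := by
    ext j
    simp only [nonpos_iff_eq_zero, Finset.mem_filter, Finset.mem_univ, true_and,
      Finset.notMem_empty, iff_false, not_and]
    omega
  simp only [ordT, hempty, Finset.sum_empty, add_zero]

theorem ordT_succ (u : Fin K → ℝ) (n : ℕ) (h : n + 1 < K) :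
    ordT ρ u ⟨n + 1, h⟩ = ordT ρ u ⟨n, by omega⟩ + ρ (u ⟨n + 1, h⟩) := by
  have hinsert : Finset.univ.filter
      (fun j : Fin K => 0 < (j : ℕ) ∧ (j : ℕ) ≤ ((⟨n + 1, h⟩ : Fin K) : ℕ)) =
      insert ⟨n + 1, h⟩ (Finset.univ.filter
        (fun j : Fin K => 0 < (j : ℕ) ∧ (j : ℕ) ≤ ((⟨n, by omega⟩ : Fin K) : ℕ))) := by
    ext j
    simp only [Finset.mem_filter, Finset.mem_univ, true_and, Finset.mem_insert, Fin.ext_iff]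
    omega
  unfold ordT
  rw [hinsert, Finset.sum_insert (by simp)]
  ring

theorem monotone_ordT {ρ : ℝ → ℝ} (hρ : ∀ t, 0 ≤ ρ t) (u : Fin K → ℝ) :
    Monotone (ordT ρ u) := fun i j hij =>
  add_le_add_right (Finset.sum_le_sum_of_subset_of_nonneg
    (fun _ ha => by
      simp only [Finset.mem_filter] at ha ⊢
      exact ⟨ha.1, ha.2.1, ha.2.2.trans hij⟩)
    fun _ _ _ => hρ _) _

theorem exists_ordT_eq {ρ : ℝ → ℝ} (hρ : Ici 0 ⊆ range ρ) {w : Fin K → ℝ} (hw : Monotone w) :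
    ∃ u, ordT ρ u = w := by
  choose σ hσ using fun t : ℝ => hρ (le_max_right t 0 : max t 0 ∈ Ici 0)
  refine ⟨fun k => if (k : ℕ) = 0 then w k else σ (w k - w ⟨k - 1, by omega⟩),
    funext fun ⟨n, hn⟩ => ?_⟩
  induction n with
  | zero => simp [ordT_zero]
  | succ m ih =>
    have hstep : w ⟨m, by omega⟩ ≤ w ⟨m + 1, hn⟩ := hw (Fin.mk_le_mk.2 m.le_succ)
    rw [ordT_succ, ih (by omega)]
    simp [hσ, max_eq_left (sub_nonneg.2 hstep)]

theorem range_ordT {ρ : ℝ → ℝ} (hρ : range ρ = Ici 0) :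
    range (ordT ρ (K := K)) = {w | Monotone w} :=
  Set.ext fun _ => ⟨fun ⟨u, hu⟩ => hu ▸ monotone_ordT (fun t => hρ.subset (mem_range_self t)) u,
    fun hw => exists_ordT_eq hρ.superset hw⟩

end OrderingTransform

section VShaped

variable {τ : ℝ → ℝ}

theorem unimodal_neg_comp [NeZero K] (hl : AntitoneOn τ (Iic 0)) (hr : MonotoneOn τ (Ici 0))
    {w : Fin K → ℝ} (hw : Monotone w) :
    Unimodal fun k => -τ (w k) := by
  obtain ⟨M, hM⟩ := Finite.exists_min fun k => τ (w k)
  refine ⟨M, fun k => neg_le_neg (hM k), fun i j hij hjM => neg_le_neg ?_,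
    fun i j hMi hij => neg_le_neg ?_⟩
  · rcases le_or_gt (w j) 0 with h | h
    · exact hl ((hw hij).trans h) h (hw hij)
    · exact (hr h.le (h.le.trans (hw hjM)) (hw hjM)).trans (hM i)
  · rcases le_or_gt 0 (w i) with h | h
    · exact hr h (h.trans (hw hij)) (hw hij)
    · exact (hl ((hw hMi).trans h.le) h.le (hw hMi)).trans (hM j)

theorem exists_monotone_comp_eq (hl : AntitoneOn τ (Iic 0)) (hr : MonotoneOn τ (Ici 0))
    (hl' : Ici (τ 0) ⊆ τ '' Iic 0) (hr' : Ici (τ 0) ⊆ τ '' Ici 0)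
    {v : Fin K → ℝ} (hv : Unimodal fun k => -v k) (hv0 : ∀ k, τ 0 ≤ v k) :
    ∃ w : Fin K → ℝ, Monotone w ∧ (fun k => τ (w k)) = v := by
  choose σl hσl using fun t : ℝ => hl' (le_max_right t (τ 0) : max t (τ 0) ∈ Ici (τ 0))
  choose σr hσr using fun t : ℝ => hr' (le_max_right t (τ 0) : max t (τ 0) ∈ Ici (τ 0))
  have hσl_inv : RightInvOn σl τ (Ici (τ 0)) := fun t ht => (hσl t).2.trans (max_eq_left ht)
  have hσr_inv : RightInvOn σr τ (Ici (τ 0)) := fun t ht => (hσr t).2.trans (max_eq_left ht)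
  have hσl_anti : AntitoneOn σl (Ici (τ 0)) :=
    Function.antitoneOn_of_rightInvOn_of_mapsTo hl hσl_inv fun t _ => (hσl t).1
  have hσr_mono : MonotoneOn σr (Ici (τ 0)) :=
    Function.monotoneOn_of_rightInvOn_of_mapsTo hr hσr_inv fun t _ => (hσr t).1
  obtain ⟨M, -, hinc, hdec⟩ := hv
  refine ⟨fun k => if k ≤ M then σl (v k) else σr (v k), fun i j hij => ?_, funext fun k => ?_⟩
  · dsimp only
    split_ifs with hi hj hj
    · exact hσl_anti (hv0 j) (hv0 i) (neg_le_neg_iff.1 (hinc i j hij hj))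
    · exact (hσl _).1.trans (hσr _).1
    · exact absurd (hij.trans hj) hi
    · exact hσr_mono (hv0 i) (hv0 j) (neg_le_neg_iff.1 (hdec i j (le_of_not_ge hi) hij))
  · dsimp only
    split_ifs
    · exact hσl_inv (hv0 k)
    · exact hσr_inv (hv0 k)

end VShaped

def Pvsl (ρ τ : ℝ → ℝ) (u : Fin K → ℝ) : Fin K → ℝ :=
  Psl fun k => τ (ordT ρ u k)

theorem range_Pvsl [NeZero K] {ρ τ : ℝ → ℝ} (hρ : range ρ = Ici 0)
    (hτ1 : AntitoneOn τ (Iio 0)) (hτ2 : MonotoneOn τ (Ioi 0))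
    (hτ3 : τ '' Iic 0 = Ici (τ 0)) (hτ4 : τ '' Ici 0 = Ici (τ 0)) :
    range (Pvsl ρ τ (K := K)) = {p | p ∈ uniSimplex K ∧ ∀ k, p k ≠ 0} := by
  have hl : AntitoneOn τ (Iic 0) :=
    hτ1.Iic_of_Iio fun x hx => hτ3.subset (mem_image_of_mem τ hx)
  have hr : MonotoneOn τ (Ici 0) :=
    hτ2.Ici_of_Ioi fun x hx => hτ4.subset (mem_image_of_mem τ hx)
  have hrange : range (Pvsl ρ τ (K := K)) =
      (fun w => Psl fun k => τ (w k)) '' {w | Monotone w} := by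
    rw [← range_ordT hρ, ← range_comp]
    rfl
  rw [hrange]
  ext p
  constructor
  · rintro ⟨w, hw, rfl⟩
    exact ⟨⟨Psl_mem_simplex _, unimodal_Psl _ (unimodal_neg_comp hl hr hw)⟩,
      fun k => (Psl_pos _ k).ne'⟩
  · rintro ⟨⟨⟨hsum, hbnd⟩, hp⟩, hne⟩
    have hpos : ∀ k, 0 < p k := fun k => (hbnd k).1.lt_of_ne' (hne k)
    obtain ⟨M, hM, -⟩ := id hp
    -- shift the log-probabilities so that their minimum, at the mode, is `τ 0`
    set c := τ 0 + log (p M)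
    have hv : Unimodal fun k => -(c - log (p k)) := by
      have hlog : MonotoneOn (fun t => log t - c) (Ioi 0) :=
        fun a ha _ _ hab => sub_le_sub_right (log_le_log ha hab) c
      simpa [Function.comp_def] using hp.comp_monotoneOn hlog hpos
    have hv0 : ∀ k, τ 0 ≤ c - log (p k) := fun k => by
      have := log_le_log (hpos k) (hM k)
      linarith
    obtain ⟨w, hw, hτw⟩ := exists_monotone_comp_eq hl hr hτ3.superset hτ4.superset hv hv0
    refine ⟨w, hw, ?_⟩
    show Psl (fun k => τ (w k)) = p
    rw [hτw]
    exact Psl_sub_log c hpos hsum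

theorem stmt2_general (K d : ℕ) (hK : 3 ≤ K)
    (ρ : ℝ → ℝ) (hρ : Set.range ρ = Set.Ici (0 : ℝ))
    (τ : ℝ → ℝ)
    (hτ1 : AntitoneOn τ (Set.Iio 0)) (hτ2 : MonotoneOn τ (Set.Ioi 0))
    (hτ3 : τ '' Set.Iic 0 = Set.Ici (τ 0))
    (hτ4 : τ '' Set.Ici 0 = Set.Ici (τ 0)) :
    {P : (Fin d → ℝ) → Fin K → ℝ |
        ∃ g : (Fin d → ℝ) → Fin K → ℝ,
          ∀ x y, P x y = Psl (fun k => τ (ordT ρ (g x) k)) y}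
      = {p : (Fin d → ℝ) → Fin K → ℝ |
          ∀ x, p x ∈ uniSimplex K ∧ ∀ k, p x k ≠ 0} := by
  have : NeZero K := ⟨by omega⟩
  have hrange := range_Pvsl (K := K) hρ hτ1 hτ2 hτ3 hτ4
  ext P
  constructor
  · rintro ⟨g, hg⟩ x
    have hPx : P x ∈ range (Pvsl ρ τ) := ⟨g x, funext fun y => (hg x y).symm⟩
    rwa [hrange] at hPx
  · intro hP
    have hPx : ∀ x, P x ∈ range (Pvsl ρ τ) := fun x => hrange ▸ hP x
    choose g hg using hPx
    exact ⟨g, fun x y => (congrFun (hg x) y).symm⟩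

/-- the representation ability of the VSL model
(P_vsl(y;u) = P_sl(y; τ(ρ[u]))) with the unrestricted learner class equals
the set of all unimodal conditional-probability maps with strictly positive
coordinates. -/
theorem stmt2 (K d : ℕ) (hK : 3 ≤ K) (hd : 1 ≤ d)
    (ρ : ℝ → ℝ) (hρ : Set.range ρ = Set.Ici (0 : ℝ))
    (τ : ℝ → ℝ)
    (hτ1 : AntitoneOn τ (Set.Iio 0)) (hτ2 : MonotoneOn τ (Set.Ioi 0))
    (hτ3 : τ '' Set.Iic 0 = Set.Ici (τ 0))
    (hτ4 : τ '' Set.Ici 0 = Set.Ici (τ 0)) :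
    {P : (Fin d → ℝ) → Fin K → ℝ |
        ∃ g : (Fin d → ℝ) → Fin K → ℝ,
          ∀ x y, P x y = Psl (fun k => τ (ordT ρ (g x) k)) y}
      = {p : (Fin d → ℝ) → Fin K → ℝ |
          ∀ x, p x ∈ uniSimplex K ∧ ∀ k, p x k ≠ 0} :=
  stmt2_general K d hK ρ hρ τ hτ1 hτ2 hτ3 hτ4
end
end

section
/- Let K ≥ 2 and let τ : ℝ → ℝ be non-increasing on u < 0, non-decreasing on u > 0, with {τ(u) : u ≤ 0} = {τ(u) : u ≥ 0} = [τ(0), ∞). Then for every unimodal PMF p ∈ Δ̂_{K-1} with all coordinates strictly positive, there exists a nondecreasing vector v ∈ ℝ^K (v_1 ≤ ⋯ ≤ v_K) such that p_y = e^{−τ(v_y)} / Σ_{k=1}^K e^{−τ(v_k)} for every y ∈ [K]. -/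
open scoped BigOperators

noncomputable section

/-- every unimodal PMF with strictly positive coordinates is
the SL link of τ applied to some nondecreasing vector. -/
theorem stmt7 (K : ℕ) (hK : 2 ≤ K)
    (τ : ℝ → ℝ)
    (hτ1 : AntitoneOn τ (Set.Iio 0)) (hτ2 : MonotoneOn τ (Set.Ioi 0))
    (hτ3 : τ '' Set.Iic 0 = Set.Ici (τ 0))
    (hτ4 : τ '' Set.Ici 0 = Set.Ici (τ 0))
    (p : Fin K → ℝ) (hp : p ∈ uniSimplex K) (hpos : ∀ k, 0 < p k) :
    ∃ v : Fin K → ℝ, Monotone v ∧ ∀ y : Fin K, p y = Psl (fun k => τ (v k)) y := by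

  obtain ⟨⟨hsum, hbound⟩, M, hM, hinc, hdec⟩ := hp
  set t : Fin K → ℝ := fun y => τ 0 + Real.log (p M / p y) with ht_def
  have ht : ∀ y, τ 0 ≤ t y := by
    intro y
    have : (0 : ℝ) ≤ Real.log (p M / p y) :=
      Real.log_nonneg ((one_le_div (hpos y)).mpr (hM y))
    simp only [ht_def]
    linarith
  have tle : ∀ a b : Fin K, p a ≤ p b → t b ≤ t a := by
    intro a b h
    simp only [ht_def]
    have h1 : p M / p b ≤ p M / p a := by
      gcongr
      exacts [(hpos M).le, hpos a]
    linarith [Real.log_le_log (div_pos (hpos M) (hpos b)) h1]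
  have hGex : ∀ s, τ 0 ≤ s → ∃ u, u ≤ 0 ∧ τ u = s := by
    intro s hs
    have : s ∈ τ '' Set.Iic 0 := by rw [hτ3]; exact hs
    obtain ⟨u, hu, hus⟩ := this
    exact ⟨u, hu, hus⟩
  have hHex : ∀ s, τ 0 ≤ s → ∃ u, 0 ≤ u ∧ τ u = s := by
    intro s hs
    have : s ∈ τ '' Set.Ici 0 := by rw [hτ4]; exact hs
    obtain ⟨u, hu, hus⟩ := this
    exact ⟨u, hu, hus⟩
  choose G hG0 hGτ using hGex
  choose H hH0 hHτ using hHex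
  have Gmono : ∀ s₁ s₂ (h₁ : τ 0 ≤ s₁) (h₂ : τ 0 ≤ s₂), s₂ ≤ s₁ →
      G s₁ h₁ ≤ G s₂ h₂ := by
    intro s₁ s₂ h₁ h₂ hle
    by_contra hlt
    push_neg at hlt
    rcases lt_or_eq_of_le (hG0 s₁ h₁) with h0 | h0
    · have hmem2 : G s₂ h₂ ∈ Set.Iio (0:ℝ) := lt_trans hlt h0
      have := hτ1 hmem2 h0 hlt.le
      rw [hGτ, hGτ] at this
      have heq : s₁ = s₂ := le_antisymm this hle
      subst heq
      exact absurd rfl hlt.ne'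
    · have hs1 : s₁ = τ 0 := by rw [← hGτ s₁ h₁, ← h0]
      have heq : s₂ = s₁ := le_antisymm hle (hs1 ▸ h₂)
      subst heq
      exact absurd rfl hlt.ne'
  have Hmono : ∀ s₁ s₂ (h₁ : τ 0 ≤ s₁) (h₂ : τ 0 ≤ s₂), s₁ ≤ s₂ →
      H s₁ h₁ ≤ H s₂ h₂ := by
    intro s₁ s₂ h₁ h₂ hle
    by_contra hlt
    push_neg at hlt
    rcases lt_or_eq_of_le (hH0 s₂ h₂) with h0 | h0
    · have hmem1 : H s₁ h₁ ∈ Set.Ioi (0:ℝ) := lt_trans h0 hlt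
      have := hτ2 h0 hmem1 hlt.le
      rw [hHτ, hHτ] at this
      have heq : s₁ = s₂ := le_antisymm hle this
      subst heq
      exact absurd rfl hlt.ne'
    · have hs2 : s₂ = τ 0 := by rw [← hHτ s₂ h₂, h0]
      have heq : s₁ = s₂ := le_antisymm hle (hs2 ▸ h₁)
      subst heq
      exact absurd rfl hlt.ne'
  refine ⟨fun k => if k ≤ M then G (t k) (ht k) else H (t k) (ht k), ?_, ?_⟩
  · intro i j hij
    by_cases hi : i ≤ M
    · by_cases hj : j ≤ M
      · simp only [hi, hj, if_pos]
        exact Gmono _ _ _ _ (tle i j (hinc i j hij hj))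
      · simp only [hi, hj, if_pos, if_neg, if_true, if_false]
        exact le_trans (hG0 _ _) (hH0 _ _)
    · have hj : ¬ j ≤ M := fun h => hi (le_trans hij h)
      simp only [hi, hj, if_neg, if_false]
      exact Hmono _ _ _ _ (tle j i (hdec i j (le_of_not_ge hi) hij))
  · intro y
    have hτv : ∀ k : Fin K,
        τ (if k ≤ M then G (t k) (ht k) else H (t k) (ht k)) = t k := by
      intro k
      split
      · exact hGτ _ _
      · exact hHτ _ _
    have hexp : ∀ k : Fin K, Real.exp (-(t k)) = Real.exp (-(τ 0)) / p M * p k := by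
      intro k
      simp only [ht_def]
      rw [neg_add, Real.exp_add, Real.exp_neg (Real.log _), Real.exp_log
        (div_pos (hpos M) (hpos k))]
      field_simp
    have hsum' : (∑ k, Real.exp (-(t k))) = Real.exp (-(τ 0)) / p M := by
      simp only [hexp, ← Finset.mul_sum, hsum, mul_one]
    have h1 : Real.exp (-(τ 0)) / p M ≠ 0 :=
      div_ne_zero (Real.exp_ne_zero _) (hpos M).ne'
    simp only [Psl, hτv, hsum', hexp y]
    exact (mul_div_cancel_left₀ (p y) h1).symm
end
end

section
/- Let K ≥ 3 and d ≥ 1, let (P_ul, G_ul) be a likelihood model with R(P_ul, G_ul) ⊆ {p : ℝ^d → Δ̂_{K-1}^∅}, let G_K = {g : ℝ^d → ℝ^K}, and for r ∈ [0,1] define P_maul,r(y; (g_1(x), g_2(x))) = (1−r)·P_ul(y; g_1(x)) + r·P_sl(y; g_2(x)) over G_ul,K = {(g_1, g_2) : g_1 ∈ G_ul, g_2 ∈ G_K}. Then R(P_maul,r, G_ul,K) ⊆ {p : ℝ^d → (Δ̂_{K-1}^{√2·r})^∅}; in particular, every predicted conditional PMF has all coordinates nonzero and its Euclidean distance to the set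 of unimodal PMFs is at most √2·r at every point x ∈ ℝ^d. -/
open scoped BigOperators

noncomputable section

/-- every conditional-probability map representable by the
mixture model P_maul,r maps into (Δ̂_{K-1}^{√2·r})^∅: at every point it is a
PMF with all coordinates nonzero whose Euclidean distance to the set of
unimodal PMFs is at most √2·r. -/
theorem stmt9 (K d : ℕ) (hK : 3 ≤ K) (hd : 1 ≤ d)
    {α : Type*} (Pul : α → Fin K → ℝ) (Gul : Set ((Fin d → ℝ) → α))
    (hrep : ∀ g ∈ Gul, ∀ x : Fin d → ℝ,
      (fun y => Pul (g x) y) ∈ uniSimplex K ∧ ∀ y, Pul (g x) y ≠ 0)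
    (r : ℝ) (hr0 : 0 ≤ r) (hr1 : r ≤ 1) :
    {P : (Fin d → ℝ) → Fin K → ℝ |
        ∃ g1 ∈ Gul, ∃ g2 : (Fin d → ℝ) → Fin K → ℝ,
          ∀ x y, P x y = (1 - r) * Pul (g1 x) y + r * Psl (g2 x) y}
      ⊆ {P : (Fin d → ℝ) → Fin K → ℝ |
          ∀ x, P x ∈ simplex K ∧ DH (P x) (uniSimplex K) ≤ Real.sqrt 2 * r ∧
            ∀ y, P x y ≠ 0} := by

  rintro P ⟨g1, hg1, g2, hP⟩ x
  obtain ⟨hps, hpne⟩ := hrep g1 hg1 x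
  set p : Fin K → ℝ := fun y => Pul (g1 x) y with hpdef
  set q : Fin K → ℝ := Psl (g2 x) with hqdef
  have hKpos : 0 < K := by omega
  have hsumexp : 0 < ∑ k, Real.exp (-(g2 x k)) :=
    Finset.sum_pos (fun k _ => Real.exp_pos _) ⟨⟨0, hKpos⟩, Finset.mem_univ _⟩
  have hqpos : ∀ y, 0 < q y := fun y => div_pos (Real.exp_pos _) hsumexp
  have hqsum : (∑ k, q k) = 1 := by
    simp only [hqdef, Psl, ← Finset.sum_div]
    exact div_self hsumexp.ne'
  have hqle : ∀ y, q y ≤ 1 := fun y => by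
    rw [← hqsum]
    exact Finset.single_le_sum (fun k _ => (hqpos k).le) (Finset.mem_univ y)
  have hpsum : (∑ k, p k) = 1 := hps.1.1
  have hpmem : ∀ k, 0 ≤ p k ∧ p k ≤ 1 := hps.1.2
  have hppos : ∀ y, 0 < p y := fun y => lt_of_le_of_ne (hpmem y).1 (Ne.symm (hpne y))
  have hPx : ∀ y, P x y = (1 - r) * p y + r * q y := fun y => hP x y
  have hPpos : ∀ y, 0 < P x y := by
    intro y
    rw [hPx y]
    rcases eq_or_lt_of_le hr0 with h | h
    · simp [← h]; exact hppos y
    · have h1 : 0 ≤ (1 - r) * p y := mul_nonneg (by linarith) (hppos y).le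
      have h2 : 0 < r * q y := mul_pos h (hqpos y)
      linarith
  have hPsum : (∑ k, P x k) = 1 := by
    simp only [hPx]
    rw [Finset.sum_add_distrib, ← Finset.mul_sum, ← Finset.mul_sum, hpsum, hqsum]
    ring
  have hPle : ∀ y, P x y ≤ 1 := by
    intro y
    rw [← hPsum]
    exact Finset.single_le_sum (fun k _ => (hPpos k).le) (Finset.mem_univ y)
  have hsimp : P x ∈ simplex K := ⟨hPsum, fun k => ⟨(hPpos k).le, hPle k⟩⟩
  refine ⟨hsimp, ?_, fun y => (hPpos y).ne'⟩
  -- distance bound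
  have hdist : euclNorm (P x - p) ≤ Real.sqrt 2 * r := by
    have h1 : ∀ k, (P x - p) k = r * (q k - p k) := by
      intro k; simp only [Pi.sub_apply, hPx k]; ring
    have h2 : (∑ k, ((P x - p) k) ^ 2) ≤ 2 * r ^ 2 := by
      have hterm : ∀ k : Fin K, ((P x - p) k) ^ 2 ≤ r ^ 2 * (q k + p k) := by
        intro k
        rw [h1 k]
        have hq1 := (hqpos k).le
        have hq2 := hqle k
        have hp1 := (hpmem k).1
        have hp2 := (hpmem k).2
        have key : (q k - p k) ^ 2 ≤ q k + p k := by nlinarith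
        have hr2 : (0:ℝ) ≤ r ^ 2 := sq_nonneg r
        calc (r * (q k - p k)) ^ 2 = r ^ 2 * (q k - p k) ^ 2 := by ring
          _ ≤ r ^ 2 * (q k + p k) := by nlinarith
      calc (∑ k, ((P x - p) k) ^ 2) ≤ ∑ k, r ^ 2 * (q k + p k) :=
            Finset.sum_le_sum (fun k _ => hterm k)
        _ = r ^ 2 * ((∑ k, q k) + ∑ k, p k) := by
            rw [← Finset.mul_sum, Finset.sum_add_distrib]
        _ = 2 * r ^ 2 := by rw [hqsum, hpsum]; ring
    have h3 : euclNorm (P x - p) ≤ Real.sqrt (2 * r ^ 2) := Real.sqrt_le_sqrt h2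
    calc euclNorm (P x - p) ≤ Real.sqrt (2 * r ^ 2) := h3
      _ = Real.sqrt 2 * r := by
          rw [Real.sqrt_mul (by norm_num), Real.sqrt_sq hr0]
  have hmemS : p ∈ uniSimplex K := hps
  have hbdd : BddBelow ((fun v => euclNorm ((P x) - v)) '' uniSimplex K) := by
    refine ⟨0, ?_⟩
    rintro _ ⟨v, _, rfl⟩
    exact Real.sqrt_nonneg _
  have hle : DH (P x) (uniSimplex K) ≤ euclNorm (P x - p) :=
    csInf_le hbdd ⟨p, hmemS, rfl⟩
  exact hle.trans hdist
end
end

section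
/- Let K ≥ 3 and d ≥ 1, let (P_ul, G_ul) be a likelihood model with R(P_ul, G_ul) ⊆ {p : ℝ^d → Δ̂_{K-1}^∅}, let G_K = {g : ℝ^d → ℝ^K}, and for r ∈ [0,1] define P_maul,r(y; (g_1(x), g_2(x))) = (1−r)·P_ul(y; g_1(x)) + r·P_sl(y; g_2(x)) over G_ul,K = {(g_1, g_2) : g_1 ∈ G_ul, g_2 ∈ G_K}. Then the representation ability is monotone in the mixture rate: if 0 ≤ r_1 ≤ r_2 ≤ 1 then R(P_maul,r_1, G_ul,K) ⊆ R(P_maul,r_2, G_ul,K). -/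
open scoped BigOperators

noncomputable section

/-! The inner mixture `(1 - r₁/r₂) p + (r₁/r₂) q` of two strictly positive PMFs is again a
strictly positive PMF `w`, and `(1 - r₁) p + r₁ q = (1 - r₂) p + r₂ w`. Every strictly positive PMF
`w` is an SL output, `w = P_sl(-log w)`, so the second component of the `r₁`-model can be
replaced by one with rate `r₂`, keeping the unimodal component. -/

-- `Δ^∅` in the paper's notation.
def posSimplex (ι : Type*) [Fintype ι] : Set (ι → ℝ) :=
  {p | (∀ i, 0 < p i) ∧ ∑ i, p i = 1}

theorem convex_posSimplex (ι : Type*) [Fintype ι] : Convex ℝ (posSimplex ι) := by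
  intro p ⟨hp, hp1⟩ q ⟨hq, hq1⟩ a b ha hb hab
  refine ⟨fun i => ?_, ?_⟩
  · rcases ha.eq_or_lt with rfl | ha
    · simpa [(zero_add b).symm.trans hab] using hq i
    · simpa using add_pos_of_pos_of_nonneg (mul_pos ha (hp i)) (mul_nonneg hb (hq i).le)
  · simp [Finset.sum_add_distrib, ← Finset.mul_sum, hp1, hq1, hab]

theorem mem_posSimplex_of_mem_simplex {K : ℕ} {p : Fin K → ℝ} (hp : p ∈ simplex K)
    (hp0 : ∀ y, p y ≠ 0) : p ∈ posSimplex (Fin K) :=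
  ⟨fun y => (hp.2 y).1.lt_of_ne' (hp0 y), hp.1⟩

theorem Psl_mem_posSimplex {K : ℕ} [NeZero K] (u : Fin K → ℝ) : Psl u ∈ posSimplex (Fin K) := by
  have hsum : 0 < ∑ k, Real.exp (-(u k)) :=
    Finset.sum_pos (fun k _ => Real.exp_pos _) Finset.univ_nonempty
  refine ⟨fun y => div_pos (Real.exp_pos _) hsum, ?_⟩
  simp only [Psl, ← Finset.sum_div, div_self hsum.ne']

theorem Psl_neg_log {K : ℕ} {p : Fin K → ℝ} (hp : p ∈ posSimplex (Fin K)) :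
    Psl (fun y => -Real.log (p y)) = p := by
  funext y
  simp only [Psl, neg_neg, Real.exp_log (hp.1 _), hp.2, div_one]

-- The hypothesis makes the junk value `r₁ / 0 = 0` harmless.
theorem mix_eq_mix_of_div {r₁ r₂ : ℝ} (h : r₂ = 0 → r₁ = 0) (a b : ℝ) :
    (1 - r₁) * a + r₁ * b = (1 - r₂) * a + r₂ * ((1 - r₁ / r₂) * a + r₁ / r₂ * b) := by
  have hr : r₂ * (r₁ / r₂) = r₁ := mul_div_cancel_of_imp' h
  linear_combination (a - b) * hr

theorem stmt10_general (K d : ℕ) (hK : 3 ≤ K)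
    {α : Type*} (Pul : α → Fin K → ℝ) (Gul : Set ((Fin d → ℝ) → α))
    (hrep : ∀ g ∈ Gul, ∀ x : Fin d → ℝ,
      (fun y => Pul (g x) y) ∈ uniSimplex K ∧ ∀ y, Pul (g x) y ≠ 0)
    (r₁ r₂ : ℝ) (hr0 : 0 ≤ r₁) (hr12 : r₁ ≤ r₂) :
    {P : (Fin d → ℝ) → Fin K → ℝ |
        ∃ g1 ∈ Gul, ∃ g2 : (Fin d → ℝ) → Fin K → ℝ,
          ∀ x y, P x y = (1 - r₁) * Pul (g1 x) y + r₁ * Psl (g2 x) y}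
      ⊆ {P : (Fin d → ℝ) → Fin K → ℝ |
          ∃ g1 ∈ Gul, ∃ g2 : (Fin d → ℝ) → Fin K → ℝ,
            ∀ x y, P x y = (1 - r₂) * Pul (g1 x) y + r₂ * Psl (g2 x) y} := by
  rintro P ⟨g1, hg1, g2, hP⟩
  have : NeZero K := ⟨by omega⟩
  have hr : r₂ = 0 → r₁ = 0 := fun h => le_antisymm (h ▸ hr12) hr0
  have ht0 : 0 ≤ r₁ / r₂ := div_nonneg hr0 (hr0.trans hr12)
  have ht1 : 0 ≤ 1 - r₁ / r₂ := sub_nonneg.2 (div_le_one_of_le₀ hr12 (hr0.trans hr12))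
  set w : (Fin d → ℝ) → Fin K → ℝ :=
    fun x => (1 - r₁ / r₂) • Pul (g1 x) + (r₁ / r₂) • Psl (g2 x)
  have hw : ∀ x, w x ∈ posSimplex (Fin K) := fun x =>
    convex_posSimplex _ (mem_posSimplex_of_mem_simplex (hrep g1 hg1 x).1.1 (hrep g1 hg1 x).2)
      (Psl_mem_posSimplex _) ht1 ht0 (sub_add_cancel _ _)
  refine ⟨g1, hg1, fun x y => -Real.log (w x y), fun x y => ?_⟩
  rw [Psl_neg_log (hw x), hP, mix_eq_mix_of_div hr]
  rfl

/-- the representation ability of the mixture model P_maul,r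
is monotone in the mixture rate r. -/
theorem stmt10 (K d : ℕ) (hK : 3 ≤ K) (hd : 1 ≤ d)
    {α : Type*} (Pul : α → Fin K → ℝ) (Gul : Set ((Fin d → ℝ) → α))
    (hrep : ∀ g ∈ Gul, ∀ x : Fin d → ℝ,
      (fun y => Pul (g x) y) ∈ uniSimplex K ∧ ∀ y, Pul (g x) y ≠ 0)
    (r₁ r₂ : ℝ) (hr0 : 0 ≤ r₁) (hr12 : r₁ ≤ r₂) (hr1 : r₂ ≤ 1) :
    {P : (Fin d → ℝ) → Fin K → ℝ |
        ∃ g1 ∈ Gul, ∃ g2 : (Fin d → ℝ) → Fin K → ℝ,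
          ∀ x y, P x y = (1 - r₁) * Pul (g1 x) y + r₁ * Psl (g2 x) y}
      ⊆ {P : (Fin d → ℝ) → Fin K → ℝ |
          ∃ g1 ∈ Gul, ∃ g2 : (Fin d → ℝ) → Fin K → ℝ,
            ∀ x y, P x y = (1 - r₂) * Pul (g1 x) y + r₂ * Psl (g2 x) y} :=
  stmt10_general K d hK Pul Gul hrep r₁ r₂ hr0 hr12
end
end
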